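/- arXiv:1707.01859 — 8 statements merged into one kernel-verified Lean document; each statement's English description precedes it below -/
import Mathlib

section
/- For every row-stochastic matrix P and every reward vector r there exist vectors g, b : S → ℝ satisfying the gain/bias equations for (P, r). (This is the solvability of the strategy-evaluation step of strategy iteration, Algorithm 1, Line 2.) -/
open Matrix Finset

/-- A matrix is row-stochastic if all entries are nonnegative and every row sums to 1. -/
def IsRowStochastic {S : Type*} [Fintype S] (P : Matrix S S ℝ) : Prop :=
  (∀ s s', 0 ≤ P s s') ∧ ∀ s, ∑ s', P s s' = 1

/-- The gain/bias equations for a transition matrix `P` and reward vector `r`. -/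
def GainBiasEq {S : Type*} [Fintype S] (P : Matrix S S ℝ) (r g b : S → ℝ) : Prop :=
  ∀ s, g s = ∑ s', P s s' * g s' ∧ b s = ∑ s', P s s' * b s' + r s - g s

lemma stochastic_mulVec_norm_le {S : Type*} [Fintype S] {P : Matrix S S ℝ}
    (hP : IsRowStochastic P) (x : S → ℝ) : ‖P.mulVec x‖ ≤ ‖x‖ := by
  rw [pi_norm_le_iff_of_nonneg (norm_nonneg x)]
  intro s
  have h1 : ‖P.mulVec x s‖ = |∑ s', P s s' * x s'| := by
    simp [Matrix.mulVec, dotProduct, Real.norm_eq_abs]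
  rw [h1]
  calc |∑ s', P s s' * x s'| ≤ ∑ s', |P s s' * x s'| := Finset.abs_sum_le_sum_abs _ _
    _ ≤ ∑ s', P s s' * ‖x‖ := by
        apply Finset.sum_le_sum
        intro i _
        rw [abs_mul, abs_of_nonneg (hP.1 s i)]
        exact mul_le_mul_of_nonneg_left (norm_le_pi_norm x i) (hP.1 s i)
    _ = ‖x‖ := by rw [← Finset.sum_mul, hP.2 s, one_mul]

/-- For every row-stochastic matrix `P` and reward vector `r` there exist vectors `g`, `b`
satisfying the gain/bias equations for `(P, r)`. -/
theorem gainBias_exists {S : Type*} [Fintype S] [Nonempty S]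
    (P : Matrix S S ℝ) (r : S → ℝ) (hP : IsRowStochastic P) :
    ∃ g b : S → ℝ, GainBiasEq P r g b := by
  classical
  set L : (S → ℝ) →ₗ[ℝ] (S → ℝ) := P.mulVecLin with hL
  set A : (S → ℝ) →ₗ[ℝ] (S → ℝ) := LinearMap.id - L with hA
  have hAapp : ∀ x : S → ℝ, A x = x - P.mulVec x := by
    intro x; simp [hA, hL]
  have hLpow_norm : ∀ (n : ℕ) (x : S → ℝ), ‖(L ^ n) x‖ ≤ ‖x‖ := by
    intro n
    induction n with
    | zero => intro x; simp
    | succ n ih =>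
      intro x
      have : (L ^ (n + 1)) x = L ((L ^ n) x) := by
        rw [pow_succ']; rfl
      rw [this]
      exact le_trans (stochastic_mulVec_norm_le hP _) (ih x)
  -- ker A and range A are disjoint
  have hdisj : Disjoint (LinearMap.ker A) (LinearMap.range A) := by
    rw [Submodule.disjoint_def]
    intro y hy hyr
    obtain ⟨x, hx⟩ := hyr
    have hLy : L y = y := by
      have h0 : A y = 0 := LinearMap.mem_ker.mp hy
      have h := hAapp y
      rw [h0] at h
      exact (sub_eq_zero.mp h.symm).symm
    have hLny : ∀ n : ℕ, (L ^ n) y = y := by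
      intro n
      induction n with
      | zero => simp
      | succ n ih =>
        rw [pow_succ, Module.End.mul_apply, hLy, ih]
    have hxy : x - L x = y := by
      have := hAapp x
      rw [hx] at this
      simpa [hL] using this.symm
    have hiter : ∀ n : ℕ, x - (L ^ n) x = (n : ℝ) • y := by
      intro n
      induction n with
      | zero => simp
      | succ n ih =>
        have h1 : (L ^ (n + 1)) x = (L ^ n) (L x) := by
          rw [pow_succ]; rfl
        have h2 : (L ^ n) x - (L ^ n) (L x) = (L ^ n) (x - L x) := (map_sub _ _ _).symm
        have : x - (L ^ (n + 1)) x = (x - (L ^ n) x) + ((L ^ n) x - (L ^ n) (L x)) := by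
          rw [h1]; abel
        rw [this, ih, h2, hxy, hLny n]
        push_cast
        module
    by_contra hy0
    have hynorm : 0 < ‖y‖ := norm_pos_iff.mpr hy0
    obtain ⟨n, hn⟩ := exists_nat_gt (2 * ‖x‖ / ‖y‖)
    have hb : (n : ℝ) * ‖y‖ ≤ 2 * ‖x‖ := by
      have := hiter n
      have h3 : ‖x - (L ^ n) x‖ ≤ 2 * ‖x‖ := by
        calc ‖x - (L ^ n) x‖ ≤ ‖x‖ + ‖(L ^ n) x‖ := norm_sub_le _ _
          _ ≤ ‖x‖ + ‖x‖ := by linarith [hLpow_norm n x]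
          _ = 2 * ‖x‖ := by ring
      rw [this] at h3
      simpa [norm_smul, abs_of_nonneg (Nat.cast_nonneg (α := ℝ) n)] using h3
    rw [div_lt_iff₀ hynorm] at hn
    linarith
  -- dimension count: ker ⊔ range = ⊤
  have hsup : LinearMap.ker A ⊔ LinearMap.range A = ⊤ := by
    apply Submodule.eq_top_of_finrank_eq
    have h1 := Submodule.finrank_sup_add_finrank_inf_eq (LinearMap.ker A) (LinearMap.range A)
    rw [disjoint_iff.mp hdisj, finrank_bot, add_zero] at h1
    have h2 := LinearMap.finrank_range_add_finrank_ker A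
    omega
  have hr : r ∈ LinearMap.ker A ⊔ LinearMap.range A := by rw [hsup]; trivial
  obtain ⟨g, hg, z, hz, hgz⟩ := Submodule.mem_sup.mp hr
  obtain ⟨b, hb⟩ := hz
  refine ⟨g, b, fun s => ?_⟩
  have hg' : g = P.mulVec g := by
    have h0 : A g = 0 := LinearMap.mem_ker.mp hg
    have := hAapp g
    rw [h0] at this
    exact (sub_eq_zero.mp this.symm)
  have hb' : b - P.mulVec b = r - g := by
    have := hAapp b
    rw [hb] at this
    rw [← this, ← hgz]; abel
  constructor
  · have := congrFun hg' s
    simpa [Matrix.mulVec, dotProduct] using this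
  · have := congrFun hb' s
    simp only [Pi.sub_apply] at this
    have hmv : P.mulVec b s = ∑ s', P s s' * b s' := by
      simp [Matrix.mulVec, dotProduct]
    linarith [hmv ▸ this]
end

section
/- The gain component of a solution of the gain/bias equations is unique: if (g, b) and (g', b') both satisfy the gain/bias equations for (P, r), then g = g'. (This is the fact, used throughout Section 3, that the gain/bias equations uniquely determine the gain but not the bias.) -/
open Matrix Finset

lemma isRowStochastic_pow {S : Type*} [Fintype S] [DecidableEq S] {P : Matrix S S ℝ}
    (hP : IsRowStochastic P) (n : ℕ) : IsRowStochastic (P ^ n) := by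
  induction n with
  | zero =>
    refine ⟨fun s s' => ?_, fun s => ?_⟩
    · simp only [pow_zero, Matrix.one_apply]
      split <;> norm_num
    · simp [pow_zero, Matrix.one_apply, Finset.sum_ite_eq]
  | succ n ih =>
    rw [pow_succ]
    refine ⟨fun s s' => ?_, fun s => ?_⟩
    · rw [Matrix.mul_apply]
      exact Finset.sum_nonneg fun k _ => mul_nonneg (ih.1 s k) (hP.1 k s')
    · simp only [Matrix.mul_apply]
      rw [Finset.sum_comm]
      calc ∑ k, ∑ s', (P ^ n) s k * P k s' = ∑ k, (P ^ n) s k * ∑ s', P k s' := by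
            simp [Finset.mul_sum]
        _ = ∑ k, (P ^ n) s k := by simp [hP.2]
        _ = 1 := ih.2 s

/-- The gain component of a solution of the gain/bias equations is unique: if `(g, b)` and
`(g', b')` both satisfy the gain/bias equations for `(P, r)`, then `g = g'`. -/
theorem gainBias_gain_unique {S : Type*} [Fintype S] [Nonempty S]
    (P : Matrix S S ℝ) (r : S → ℝ) (hP : IsRowStochastic P)
    (g b g' b' : S → ℝ) (h : GainBiasEq P r g b) (h' : GainBiasEq P r g' b') :
    g = g' := by
  haveI := Classical.decEq S
  set d : S → ℝ := fun s => g s - g' s with hd_def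
  set c : S → ℝ := fun s => b s - b' s with hc_def
  -- d is harmonic
  have hd : P.mulVec d = d := by
    funext s
    simp only [Matrix.mulVec, dotProduct, hd_def, mul_sub,
      Finset.sum_sub_distrib, ← (h s).1, ← (h' s).1]
  -- P c = c + d
  have hc : P.mulVec c = c + d := by
    funext s
    have h1 := (h s).2
    have h2 := (h' s).2
    simp only [Matrix.mulVec, dotProduct, hc_def, hd_def, mul_sub,
      Finset.sum_sub_distrib, Pi.add_apply]
    have e1 : ∑ x, P s x * b x = b s - r s + g s := by linarith
    have e2 : ∑ x, P s x * b' x = b' s - r s + g' s := by linarith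
    rw [e1, e2]; ring
  -- (P^n) d = d
  have hdn : ∀ n : ℕ, (P ^ n).mulVec d = d := by
    intro n
    induction n with
    | zero => simp
    | succ n ih => rw [pow_succ, ← Matrix.mulVec_mulVec, hd, ih]
  -- key identity: c = (P^n) c - n • d
  have key : ∀ n : ℕ, (P ^ n).mulVec c = c + (n : ℝ) • d := by
    intro n
    induction n with
    | zero => simp
    | succ n ih =>
      rw [pow_succ, ← Matrix.mulVec_mulVec, hc, Matrix.mulVec_add, ih, hdn]
      push_cast
      funext s
      simp [Pi.add_apply, Pi.smul_apply]
      ring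
  -- bound on c
  obtain ⟨M, hM⟩ : ∃ M : ℝ, ∀ s, |c s| ≤ M := by
    obtain ⟨s₀, hs₀⟩ := Finset.exists_max_image Finset.univ (fun s => |c s|)
      ⟨Classical.arbitrary S, Finset.mem_univ _⟩
    exact ⟨|c s₀|, fun s => hs₀.2 s (Finset.mem_univ s)⟩
  have hM0 : 0 ≤ M := le_trans (abs_nonneg _) (hM (Classical.arbitrary S))
  -- each |(P^n c) s| ≤ M
  have hbound : ∀ (n : ℕ) (s : S), |(P ^ n).mulVec c s| ≤ M := by
    intro n s
    have hPn := isRowStochastic_pow hP n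
    calc |(P ^ n).mulVec c s| = |∑ x, (P ^ n) s x * c x| := rfl
      _ ≤ ∑ x, |(P ^ n) s x * c x| := Finset.abs_sum_le_sum_abs _ _
      _ ≤ ∑ x, (P ^ n) s x * M := by
          apply Finset.sum_le_sum
          intro x _
          rw [abs_mul, abs_of_nonneg (hPn.1 s x)]
          exact mul_le_mul_of_nonneg_left (hM x) (hPn.1 s x)
      _ = M := by rw [← Finset.sum_mul, hPn.2 s, one_mul]
  -- conclude d = 0
  have hd0 : ∀ s, d s = 0 := by
    intro s
    by_contra hne
    have habs : 0 < |d s| := abs_pos.mpr hne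
    obtain ⟨n, hn⟩ := exists_nat_gt ((2 * M) / |d s|)
    have h1 : (n : ℝ) * |d s| > 2 * M := by
      rwa [div_lt_iff₀ habs] at hn
    have h2 : |(n : ℝ) • d s| ≤ 2 * M := by
      have := key n
      have heq : (n : ℝ) • d s = (P ^ n).mulVec c s - c s := by
        have := congrFun this s
        simp only [Pi.add_apply, Pi.smul_apply] at this
        linarith [this]
      rw [heq]
      calc |(P ^ n).mulVec c s - c s| ≤ |(P ^ n).mulVec c s| + |c s| := abs_sub _ _
        _ ≤ M + M := add_le_add (hbound n s) (hM s)
        _ = 2 * M := by ring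
    rw [smul_eq_mul, abs_mul, Nat.abs_cast] at h2
    linarith
  funext s
  have := hd0 s
  simp only [hd_def] at this
  linarith
end

section
/- If (g, b) satisfies the gain/bias equations for (P, r), then for every state s one has min_{t} r t ≤ g s ≤ max_{t} r t, where the minimum and maximum are taken over all states t. (This bound is what makes the values f(M) = g*(M)/r_max of the weighted MEC quotient in Algorithm 2 lie in [0, 1].) -/
open Matrix Finset

lemma gainBias_exists_upper {S : Type*} [Fintype S] [Nonempty S]
    (P : Matrix S S ℝ) (r g b : S → ℝ) (hP : IsRowStochastic P)
    (h : GainBiasEq P r g b) (s : S) : ∃ t, g s ≤ r t := by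
  obtain ⟨s0, -, hs0⟩ := Finset.exists_max_image (univ : Finset S) g ⟨Classical.arbitrary S, mem_univ _⟩
  set A : Finset S := univ.filter (fun t => g t = g s0) with hA
  have hs0A : s0 ∈ A := by simp [hA]
  obtain ⟨s1, hs1A, hs1⟩ := Finset.exists_max_image A b ⟨s0, hs0A⟩
  have hgs1 : g s1 = g s0 := by simpa [hA] using hs1A
  -- closedness: if t ∈ A and P t t' > 0 then g t' = g s0
  have hclosed : ∀ t ∈ A, ∀ t', 0 < P t t' → g t' = g s0 := by
    intro t htA t' hpos
    have hgt : g t = g s0 := by simpa [hA] using htA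
    have hsum : ∑ s', P t s' * (g s0 - g s') = 0 := by
      have h1 := (h t).1
      have h2 : ∑ s', P t s' * g s0 = g s0 := by
        rw [← Finset.sum_mul, hP.2 t, one_mul]
      simp only [mul_sub]
      rw [Finset.sum_sub_distrib, h2, ← h1, hgt, sub_self]
    have hnn : ∀ s' ∈ (univ : Finset S), 0 ≤ P t s' * (g s0 - g s') := by
      intro s' _
      exact mul_nonneg (hP.1 t s') (sub_nonneg.2 (hs0 s' (mem_univ _)))
    have := (Finset.sum_eq_zero_iff_of_nonneg hnn).1 hsum t' (mem_univ _)
    rcases mul_eq_zero.1 this with h0 | h0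
    · exact absurd h0 (ne_of_gt hpos)
    · linarith [sub_eq_zero.1 h0]
  -- at s1: sum of P s1 s' * b s' ≤ b s1
  have hble : ∑ s', P s1 s' * b s' ≤ b s1 := by
    calc ∑ s', P s1 s' * b s' ≤ ∑ s', P s1 s' * b s1 := by
          apply Finset.sum_le_sum
          intro t' _
          rcases lt_or_eq_of_le (hP.1 s1 t') with hpos | h0
          · have ht'A : t' ∈ A := by simp [hA, hclosed s1 hs1A t' hpos]
            exact mul_le_mul_of_nonneg_left (hs1 t' ht'A) (le_of_lt hpos)
          · simp [← h0]
      _ = b s1 := by rw [← Finset.sum_mul, hP.2 s1, one_mul]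
  have hb := (h s1).2
  have : g s1 ≤ r s1 := by linarith
  exact ⟨s1, le_trans (hgs1 ▸ hs0 s (mem_univ _)) this⟩

/-- If `(g, b)` satisfies the gain/bias equations for `(P, r)`, then for every state `s`,
`min_t r t ≤ g s ≤ max_t r t`. -/
theorem gainBias_gain_bounds {S : Type*} [Fintype S] [Nonempty S]
    (P : Matrix S S ℝ) (r g b : S → ℝ) (hP : IsRowStochastic P)
    (h : GainBiasEq P r g b) (s : S) :
    (⨅ t, r t) ≤ g s ∧ g s ≤ ⨆ t, r t := by
  constructor
  · have hneg : GainBiasEq P (-r) (-g) (-b) := by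
      intro t
      obtain ⟨h1, h2⟩ := h t
      constructor
      · simp only [Pi.neg_apply]
        rw [h1]
        simp [Finset.sum_neg_distrib, mul_neg]
      · simp only [Pi.neg_apply, mul_neg, Finset.sum_neg_distrib]
        rw [h2]
        ring
    obtain ⟨t, ht⟩ := gainBias_exists_upper P (-r) (-g) (-b) hP hneg s
    have : r t ≤ g s := by simpa using neg_le_neg ht
    exact le_trans (ciInf_le (Finite.bddBelow_range r) t) this
  · obtain ⟨t, ht⟩ := gainBias_exists_upper P r g b hP h s
    exact le_trans ht (le_ciSup (Finite.bddAbove_range r) t)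
end

section
/- Every vector that is harmonic for a row-stochastic matrix is constant on each bottom strongly connected component: if g : S → ℝ satisfies g s = ∑_{s'} P s s' * g s' for all s, and B is a BSCC of P, then g s = g s' for all s, s' ∈ B. -/
open Matrix Finset

/-- `s` reaches `s'` if `(s, s')` is in the reflexive-transitive closure of the relation
"leads to", i.e. `P s s' > 0`. -/
def Reaches {S : Type*} (P : Matrix S S ℝ) : S → S → Prop :=
  Relation.ReflTransGen fun s s' => 0 < P s s'

/-- A set `C` of states is closed if `P s s' = 0` whenever `s ∈ C` and `s' ∉ C`. -/
def IsClosedSet {S : Type*} (P : Matrix S S ℝ) (C : Set S) : Prop :=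
  ∀ s ∈ C, ∀ s' ∉ C, P s s' = 0

/-- A bottom strongly connected component (BSCC) of `P` is a nonempty closed set in which
every two states reach each other. -/
def IsBSCC {S : Type*} (P : Matrix S S ℝ) (B : Set S) : Prop :=
  B.Nonempty ∧ IsClosedSet P B ∧ ∀ s ∈ B, ∀ s' ∈ B, Reaches P s s'

/-- Every vector that is harmonic for a row-stochastic matrix is constant on each bottom
strongly connected component. -/
theorem harmonic_const_on_bscc {S : Type*} [Fintype S] [Nonempty S]
    (P : Matrix S S ℝ) (hP : IsRowStochastic P)
    (g : S → ℝ) (hg : ∀ s, g s = ∑ s', P s s' * g s')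
    (B : Set S) (hB : IsBSCC P B) :
    ∀ s ∈ B, ∀ s' ∈ B, g s = g s' := by
  obtain ⟨hne, hclosed, hreach⟩ := hB
  have hfin : B.Finite := Set.toFinite B
  obtain ⟨s₀, hs₀B, hmax⟩ : ∃ s₀ ∈ B, ∀ s ∈ B, g s ≤ g s₀ := by
    obtain ⟨s₀, hs₀, h⟩ := hfin.toFinset.exists_max_image g (by simpa using hne)
    exact ⟨s₀, by simpa using hs₀, fun s hs => h s (by simpa using hs)⟩
  have step : ∀ s ∈ B, g s = g s₀ → ∀ s', 0 < P s s' → s' ∈ B ∧ g s' = g s₀ := by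
    intro s hsB hgs s' hps'
    have hs'B : s' ∈ B := by
      by_contra h
      exact absurd (hclosed s hsB s' h) (ne_of_gt hps')
    refine ⟨hs'B, ?_⟩
    have hterm : ∀ t, P s t * g t ≤ P s t * g s₀ := by
      intro t
      by_cases ht : t ∈ B
      · exact mul_le_mul_of_nonneg_left (hmax t ht) (hP.1 s t)
      · simp [hclosed s hsB t ht]
    have hsum : ∑ t, P s t * g t = ∑ t, P s t * g s₀ := by
      rw [← hg s, hgs, ← Finset.sum_mul, hP.2 s, one_mul]
    have heq := (Finset.sum_eq_sum_iff_of_le (fun t _ => hterm t)).mp hsum s'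
      (Finset.mem_univ _)
    exact mul_left_cancel₀ (ne_of_gt hps') heq
  have main : ∀ s', Reaches P s₀ s' → s' ∈ B ∧ g s' = g s₀ := by
    intro s' h
    induction h with
    | refl => exact ⟨hs₀B, rfl⟩
    | tail _ hp ih => exact step _ ih.1 ih.2 _ hp
  intro s hs s' hs'
  rw [(main s (hreach s₀ hs₀B s hs)).2, (main s' (hreach s₀ hs₀B s' hs')).2]
end

section
/- (Lemma 1: gain is constant on the attractor of a BSCC.) If g : S → ℝ satisfies g s = ∑_{s'} P s s' * g s' for all s, B is a BSCC of P, and s, s' both belong to the attractor of B, then g s = g s'. -/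
open Matrix Finset

/-- The attractor of a BSCC `B`: the set of states `s` such that every state `t` reachable from
`s` that belongs to some BSCC lies in `B`. -/
def attractor {S : Type*} (P : Matrix S S ℝ) (B : Set S) : Set S :=
  {s | ∀ t, Reaches P s t → (∃ B', IsBSCC P B' ∧ t ∈ B') → t ∈ B}
/-!
Maximum principle: if `g` is harmonic and `u` maximises `g` among the states reachable from `u`,
then, since `g u` is an average of the values at the successors of `u`, all of them attain the
maximum, and by induction `g` is constant on everything reachable from `u`. A maximiser of `g` over
a BSCC is such a state, so `g` is constant on each BSCC. From a state `s` of the attractor of `B`,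
a maximiser `u` of `g` over the states reachable from `s` still reaches some BSCC, necessarily `B`,
so `g s ≤ g u = g|_B`; applied to `-g` this gives the reverse inequality.
-/

def IsHarmonic {S : Type*} [Fintype S] (P : Matrix S S ℝ) (g : S → ℝ) : Prop :=
  ∀ s, g s = ∑ s', P s s' * g s'

theorem IsHarmonic.neg {S : Type*} [Fintype S] {P : Matrix S S ℝ} {g : S → ℝ}
    (hg : IsHarmonic P g) : IsHarmonic P (-g) := fun s => by
  simp only [Pi.neg_apply, mul_neg, sum_neg_distrib, neg_inj]
  exact hg s

theorem eq_of_sum_mul_eq_of_le {S : Type*} [Fintype S] {p f : S → ℝ} {c : ℝ}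
    (hp : ∀ t, 0 ≤ p t) (hsum : ∑ t, p t = 1) (hf : ∀ t, 0 < p t → f t ≤ c)
    (heq : ∑ t, p t * f t = c) {t : S} (ht : 0 < p t) : f t = c := by
  have hle : ∀ t ∈ univ, p t * f t ≤ p t * c := by
    intro t _
    rcases (hp t).eq_or_lt with h | h
    · simp [← h]
    · exact mul_le_mul_of_nonneg_left (hf t h) h.le
  have hsum_eq : ∑ t, p t * f t = ∑ t, p t * c := by rw [heq, ← sum_mul, hsum, one_mul]
  exact mul_left_cancel₀ ht.ne' ((sum_eq_sum_iff_of_le hle).1 hsum_eq t (mem_univ t))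

section Reachability

variable {S : Type*} {P : Matrix S S ℝ}

theorem Reaches.mem_attractor {B : Set S} {s t : S} (h : Reaches P s t)
    (hs : s ∈ attractor P B) : t ∈ attractor P B :=
  fun u hu => hs u (h.trans hu)

theorem Reaches.mem_of_isClosedSet {C : Set S} {s t : S} (h : Reaches P s t)
    (hC : IsClosedSet P C) (hs : s ∈ C) : t ∈ C := by
  induction h with
  | refl => exact hs
  | tail _ hstep ih => exact by_contra fun hnot => hstep.ne' (hC _ ih _ hnot)

theorem isClosedSet_setOf_reaches (hP : ∀ s s', 0 ≤ P s s') (s : S) :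
    IsClosedSet P {t | Reaches P s t} := fun _ ht u hu =>
  by_contra fun hne => hu (ht.tail ((hP _ u).lt_of_ne' hne))

variable [Finite S]

/-- The states reachable from a state `t` whose reachable set has minimal size form a BSCC. -/
theorem exists_reaches_mem_isBSCC (hP : ∀ s s', 0 ≤ P s s') (s : S) :
    ∃ t, Reaches P s t ∧ ∃ B, IsBSCC P B ∧ t ∈ B := by
  let R : S → Set S := fun u => {v | Reaches P u v}
  obtain ⟨t, hst, hmin⟩ := Set.exists_min_image (R s) (fun u => (R u).ncard) (Set.toFinite _)
    ⟨s, Relation.ReflTransGen.refl⟩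
  refine ⟨t, hst, R t, ⟨⟨t, .refl⟩, isClosedSet_setOf_reaches hP t, fun u hu v hv => ?_⟩, .refl⟩
  have hsub : R u ⊆ R t := fun x hx => Relation.ReflTransGen.trans hu hx
  have heq : R u = R t :=
    Set.eq_of_subset_of_ncard_le hsub (hmin u (hst.trans hu)) (Set.toFinite _)
  exact heq.ge hv

end Reachability

section MaximumPrinciple

variable {S : Type*} [Fintype S] {P : Matrix S S ℝ} {g : S → ℝ}

theorem IsHarmonic.eq_of_reaches_of_forall_reaches_le (hP : IsRowStochastic P)
    (hg : IsHarmonic P g) {u : S} (hmax : ∀ w, Reaches P u w → g w ≤ g u) {w : S}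
    (huw : Reaches P u w) : g w = g u := by
  induction huw with
  | refl => rfl
  | @tail v w huv hvw ih =>
    rw [← ih]
    exact eq_of_sum_mul_eq_of_le (hP.1 v) (hP.2 v)
      (fun x hx => (hmax x (huv.tail hx)).trans_eq ih.symm) (hg v).symm hvw

theorem IsHarmonic.eq_of_mem_isBSCC (hP : IsRowStochastic P) (hg : IsHarmonic P g)
    {B : Set S} (hB : IsBSCC P B) {x y : S} (hx : x ∈ B) (hy : y ∈ B) : g x = g y := by
  obtain ⟨hne, hclosed, hreach⟩ := hB
  obtain ⟨b, hb, hbmax⟩ := Set.exists_max_image B g (Set.toFinite _) hne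
  have hmax : ∀ w, Reaches P b w → g w ≤ g b := fun w hw =>
    hbmax w (hw.mem_of_isClosedSet hclosed hb)
  rw [hg.eq_of_reaches_of_forall_reaches_le hP hmax (hreach b hb x hx),
    hg.eq_of_reaches_of_forall_reaches_le hP hmax (hreach b hb y hy)]

theorem IsHarmonic.le_of_mem_attractor (hP : IsRowStochastic P) (hg : IsHarmonic P g)
    {B : Set S} (hB : IsBSCC P B) {s b : S} (hs : s ∈ attractor P B) (hb : b ∈ B) :
    g s ≤ g b := by
  obtain ⟨u, hsu, hu⟩ := Set.exists_max_image {t | Reaches P s t} g (Set.toFinite _)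
    ⟨s, Relation.ReflTransGen.refl⟩
  have hmax : ∀ w, Reaches P u w → g w ≤ g u := fun w huw => hu w (hsu.trans huw)
  obtain ⟨t, hut, hbscc⟩ := exists_reaches_mem_isBSCC hP.1 u
  have ht : t ∈ B := (hsu.mem_attractor hs) t hut hbscc
  calc g s ≤ g u := hu s .refl
    _ = g t := (hg.eq_of_reaches_of_forall_reaches_le hP hmax hut).symm
    _ = g b := hg.eq_of_mem_isBSCC hP hB ht hb

end MaximumPrinciple

theorem harmonic_const_on_attractor_general {S : Type*} [Fintype S]
    (P : Matrix S S ℝ) (hP : IsRowStochastic P)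
    (g : S → ℝ) (hg : ∀ s, g s = ∑ s', P s s' * g s')
    (B : Set S) (hB : IsBSCC P B) :
    ∀ s ∈ attractor P B, ∀ s' ∈ attractor P B, g s = g s' := by
  have hg : IsHarmonic P g := hg
  obtain ⟨b, hb⟩ := hB.1
  have hconst : ∀ s ∈ attractor P B, g s = g b := fun s hs =>
    le_antisymm (hg.le_of_mem_attractor hP hB hs hb)
      (neg_le_neg_iff.1 (hg.neg.le_of_mem_attractor hP hB hs hb))
  intro s hs s' hs'
  rw [hconst s hs, hconst s' hs']

/-- Lemma 1: a harmonic vector is constant on the attractor of a BSCC. -/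
theorem harmonic_const_on_attractor {S : Type*} [Fintype S] [Nonempty S]
    (P : Matrix S S ℝ) (hP : IsRowStochastic P)
    (g : S → ℝ) (hg : ∀ s, g s = ∑ s', P s s' * g s')
    (B : Set S) (hB : IsBSCC P B) :
    ∀ s ∈ attractor P B, ∀ s' ∈ attractor P B, g s = g s' :=
  harmonic_const_on_attractor_general P hP g hg B hB
end

section
/- (Corollary 1: correctness of BSCC compression.) Let B_1, …, B_n be an enumeration of all BSCCs of P, let A_i be the attractor of B_i, let T = S \ (A_1 ∪ … ∪ A_n), and fix a state s_i ∈ B_i for each i. Then real numbers g_1, …, g_n together with vectors g defined on T and b : S → ℝ satisfy the BSCC-compressed gain/bias equations, namely (i) g s = ∑_{s' ∈ T} P s s' * g s' + ∑_{i=1}^n g_i * (∑_{s' ∈ A_i} P s s') for all s ∈ T, (ii) b s = ∑_{s' ∈ A_i} P s s' * b s' + r s - g_i for all i and all s ∈ A_i, (iii) b s = ∑_{s'} P s s' * b s' + r s - g s for all s ∈ T, and (iv) b s_i = 0 for each i, if and only if the vector g' : S → ℝ defined by g' s = g_i for s ∈ A_i and g' s = g s for s ∈ T, together with b, satisfies the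 gain/bias equations for (P, r) and b s_i = 0 for each i. -/
open Matrix Finset

/-!
Attractors of distinct BSCCs are disjoint, since every state reaches some BSCC, and each
attractor is closed. A closed set carries the whole mass of every row starting in it, so on
`A i` the gain equation for `g'` holds automatically (`g'` is constant there and rows sum to
`1`) and the bias equation only involves states of `A i`. On `T`, the sum `∑ s', P s s' * g' s'`
splits along the partition of `S` into `T` and the `A i`, which gives the compressed gain
equation.
-/

open Function

section

variable {S : Type*}

theorem sum_eq_finsum_mem_add_finsum_mem_compl {M : Type*} [AddCommMonoid M] [Fintype S]
    (f : S → M) (C : Set S) : ∑ s, f s = (∑ᶠ s ∈ C, f s) + ∑ᶠ s ∈ Cᶜ, f s := by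
  rw [← finsum_mem_union disjoint_compl_right C.toFinite Cᶜ.toFinite, Set.union_compl_self,
    finsum_mem_univ, finsum_eq_sum_of_fintype]

theorem sum_eq_finsum_mem_compl_iUnion_add_sum {M : Type*} [AddCommMonoid M] [Fintype S]
    {ι : Type*} [Fintype ι] {A : ι → Set S} (hA : Pairwise (Disjoint on A)) (f : S → M) :
    ∑ s, f s = (∑ᶠ s ∈ (⋃ i, A i)ᶜ, f s) + ∑ i, ∑ᶠ s ∈ A i, f s := by
  rw [sum_eq_finsum_mem_add_finsum_mem_compl f (⋃ i, A i), add_comm,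
    finsum_mem_iUnion hA fun i => (A i).toFinite,
    finsum_eq_sum_of_fintype fun i => ∑ᶠ s ∈ A i, f s]

theorem IsClosedSet.mem_of_reaches {P : Matrix S S ℝ} {C : Set S} (hC : IsClosedSet P C)
    {s t : S} (hs : s ∈ C) (h : Reaches P s t) : t ∈ C := by
  induction h with
  | refl => exact hs
  | tail _ hstep ih => exact not_not.1 fun ht => hstep.ne' (hC _ ih _ ht)

theorem IsBSCC.eq_of_mem {P : Matrix S S ℝ} {B₁ B₂ : Set S} (h₁ : IsBSCC P B₁)
    (h₂ : IsBSCC P B₂) {t : S} (ht₁ : t ∈ B₁) (ht₂ : t ∈ B₂) : B₁ = B₂ :=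
  Set.Subset.antisymm (fun u hu => h₂.2.1.mem_of_reaches ht₂ (h₁.2.2 t ht₁ u hu))
    fun u hu => h₁.2.1.mem_of_reaches ht₁ (h₂.2.2 t ht₂ u hu)

theorem isClosedSet_reaches {P : Matrix S S ℝ} (hP : ∀ s s', 0 ≤ P s s') (s : S) :
    IsClosedSet P {t | Reaches P s t} :=
  fun _ ht _ ht' => not_not.1 fun h => ht' (ht.tail ((hP _ _).lt_of_ne' h))

theorem isClosedSet_attractor {P : Matrix S S ℝ} (hP : ∀ s s', 0 ≤ P s s') (B : Set S) :
    IsClosedSet P (attractor P B) :=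
  fun _ hs _ ht => not_not.1 fun h => ht fun u hu =>
    hs u (Relation.ReflTransGen.head ((hP _ _).lt_of_ne' h) hu)

/-- A state whose set of reachable states is minimal generates a BSCC. -/
theorem exists_reaches_isBSCC [Finite S] {P : Matrix S S ℝ} (hP : ∀ s s', 0 ≤ P s s') (s : S) :
    ∃ t, Reaches P s t ∧ ∃ B, IsBSCC P B ∧ t ∈ B := by
  obtain ⟨t, hst, hmin⟩ :=
    exists_minimalFor_of_wellFoundedLT (Reaches P s) (fun t => {u | Reaches P t u}) ⟨s, .refl⟩
  refine ⟨t, hst, _, ⟨⟨t, .refl⟩, isClosedSet_reaches hP t, fun u hu v hv => ?_⟩, .refl⟩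
  have hsub : {w | Reaches P u w} ⊆ {w | Reaches P t w} := fun w hw => hu.trans hw
  exact hmin (hst.trans hu) hsub hv

theorem IsBSCC.eq_of_mem_attractor [Finite S] {P : Matrix S S ℝ} (hP : ∀ s s', 0 ≤ P s s')
    {B₁ B₂ : Set S} (h₁ : IsBSCC P B₁) (h₂ : IsBSCC P B₂) {s : S}
    (hs₁ : s ∈ attractor P B₁) (hs₂ : s ∈ attractor P B₂) : B₁ = B₂ := by
  obtain ⟨t, hst, hB⟩ := exists_reaches_isBSCC hP s
  exact h₁.eq_of_mem h₂ (hs₁ t hst hB) (hs₂ t hst hB)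

theorem pairwise_disjoint_attractor [Finite S] {P : Matrix S S ℝ} (hP : ∀ s s', 0 ≤ P s s')
    {ι : Type*} {B : ι → Set S} (hB : ∀ i, IsBSCC P (B i)) (hBinj : Function.Injective B) :
    Pairwise (Disjoint on fun i => attractor P (B i)) :=
  fun i j hij => Set.disjoint_left.2 fun _ hi hj =>
    hij (hBinj ((hB i).eq_of_mem_attractor hP (hB j) hi hj))

section Sums

variable [Fintype S] {P : Matrix S S ℝ} {C : Set S}

theorem IsClosedSet.sum_mul_eq_finsum_mem (hC : IsClosedSet P C) {s : S} (hs : s ∈ C)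
    (f : S → ℝ) : ∑ s', P s s' * f s' = ∑ᶠ s' ∈ C, P s s' * f s' := by
  rw [sum_eq_finsum_mem_add_finsum_mem_compl _ C,
    finsum_mem_of_eqOn_zero (s := Cᶜ) fun s' hs' => by simp [hC s hs s' hs'], add_zero]

theorem IsClosedSet.sum_mul_eq_of_eqOn (hC : IsClosedSet P C) {s : S} (hs : s ∈ C)
    (hrow : ∑ s', P s s' = 1) {f : S → ℝ} {c : ℝ} (hf : ∀ s' ∈ C, f s' = c) :
    ∑ s', P s s' * f s' = c := by
  have hrowC : ∑ᶠ s' ∈ C, P s s' = 1 := by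
    have h := hC.sum_mul_eq_finsum_mem hs fun _ => 1
    simp only [mul_one] at h
    rw [← h, hrow]
  rw [hC.sum_mul_eq_finsum_mem hs, finsum_mem_congr rfl fun s' hs' => by rw [hf s' hs'],
    ← finsum_mem_mul' _ _ C.toFinite, hrowC, one_mul]

theorem sum_mul_eq_of_piecewise {ι : Type*} [Fintype ι] {A : ι → Set S}
    (hA : Pairwise (Disjoint on A)) (w f g : S → ℝ) (c : ι → ℝ)
    (hfA : ∀ i, ∀ s ∈ A i, f s = c i) (hfT : ∀ s ∈ (⋃ i, A i)ᶜ, f s = g s) :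
    ∑ s, w s * f s = (∑ᶠ s ∈ (⋃ i, A i)ᶜ, w s * g s) + ∑ i, c i * ∑ᶠ s ∈ A i, w s := by
  rw [sum_eq_finsum_mem_compl_iUnion_add_sum hA,
    finsum_mem_congr rfl fun s hs => by rw [hfT s hs]]
  congr 1
  refine Finset.sum_congr rfl fun i _ => ?_
  rw [mul_finsum_mem' _ _ (A i).toFinite, finsum_mem_congr rfl fun s hs => by rw [hfA i s hs]]
  exact finsum_mem_congr rfl fun _ _ => mul_comm _ _

end Sums

end

theorem bscc_compression_correct_general {S : Type*} [Fintype S]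
    (P : Matrix S S ℝ) (r : S → ℝ) (hP : IsRowStochastic P)
    (n : ℕ) (B : Fin n → Set S)
    (hB : ∀ i, IsBSCC P (B i))
    (hBinj : Function.Injective B)
    (A : Fin n → Set S) (hA : ∀ i, A i = attractor P (B i))
    (T : Set S) (hT : T = (⋃ i, A i)ᶜ)
    (sref : Fin n → S)
    (gains : Fin n → ℝ) (g b g' : S → ℝ)
    (hg'A : ∀ i, ∀ s ∈ A i, g' s = gains i)
    (hg'T : ∀ s ∈ T, g' s = g s) :
    ((∀ s ∈ T, g s = (∑ᶠ s' ∈ T, P s s' * g s') +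
        ∑ i, gains i * ∑ᶠ s' ∈ A i, P s s') ∧
     (∀ i, ∀ s ∈ A i, b s = (∑ᶠ s' ∈ A i, P s s' * b s') + r s - gains i) ∧
     (∀ s ∈ T, b s = (∑ s', P s s' * b s') + r s - g s) ∧
     (∀ i, b (sref i) = 0)) ↔
    (GainBiasEq P r g' b ∧ ∀ i, b (sref i) = 0) := by
  subst hT
  have hclosed (i : Fin n) : IsClosedSet P (A i) := hA i ▸ isClosedSet_attractor hP.1 (B i)
  have hdisj : Pairwise (Disjoint on A) := by
    rw [funext hA]
    exact pairwise_disjoint_attractor hP.1 hB hBinj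
  have hgain (s : S) := sum_mul_eq_of_piecewise hdisj (P s) g' g gains hg'A hg'T
  have hgainA (i : Fin n) (s : S) (hs : s ∈ A i) : ∑ s', P s s' * g' s' = gains i :=
    (hclosed i).sum_mul_eq_of_eqOn hs (hP.2 s) (hg'A i)
  have hbiasA (i : Fin n) (s : S) (hs : s ∈ A i) := (hclosed i).sum_mul_eq_finsum_mem hs b
  constructor
  · rintro ⟨hgT, hbA, hbT, href⟩
    refine ⟨fun s => ?_, href⟩
    by_cases hs : s ∈ (⋃ i, A i)ᶜ
    · rw [hg'T s hs, hgain s]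
      exact ⟨hgT s hs, hbT s hs⟩
    · obtain ⟨i, hi⟩ := Set.mem_iUnion.1 (Set.notMem_compl_iff.1 hs)
      rw [hg'A i s hi, hgainA i s hi, hbiasA i s hi]
      exact ⟨rfl, hbA i s hi⟩
  · rintro ⟨heq, href⟩
    refine ⟨fun s hs => ?_, fun i s hs => ?_, fun s hs => ?_, href⟩
    · simpa only [hg'T s hs, hgain s] using (heq s).1
    · simpa only [hg'A i s hs, hbiasA i s hs] using (heq s).2
    · simpa only [hg'T s hs] using (heq s).2

/-- Corollary 1: correctness of BSCC compression.  Given an enumeration `B 1, …, B n` of all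
BSCCs of `P`, attractors `A i` of `B i`, `T` the complement of the union of the attractors and
reference states `sref i ∈ B i`, the numbers `gains i` together with `g` (on `T`) and `b`
satisfy the BSCC-compressed gain/bias equations if and only if the vector `g'` (equal to
`gains i` on `A i` and to `g` on `T`), together with `b`, satisfies the gain/bias equations
for `(P, r)` and `b (sref i) = 0` for each `i`. -/
theorem bscc_compression_correct {S : Type*} [Fintype S] [Nonempty S]
    (P : Matrix S S ℝ) (r : S → ℝ) (hP : IsRowStochastic P)
    (n : ℕ) (B : Fin n → Set S)
    (hB : ∀ i, IsBSCC P (B i))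
    (hBinj : Function.Injective B)
    (hBall : ∀ C : Set S, IsBSCC P C → ∃ i, C = B i)
    (A : Fin n → Set S) (hA : ∀ i, A i = attractor P (B i))
    (T : Set S) (hT : T = (⋃ i, A i)ᶜ)
    (sref : Fin n → S) (hsref : ∀ i, sref i ∈ B i)
    (gains : Fin n → ℝ) (g b g' : S → ℝ)
    (hg'A : ∀ i, ∀ s ∈ A i, g' s = gains i)
    (hg'T : ∀ s ∈ T, g' s = g s) :
    ((∀ s ∈ T, g s = (∑ᶠ s' ∈ T, P s s' * g s') +
        ∑ i, gains i * ∑ᶠ s' ∈ A i, P s s') ∧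
     (∀ i, ∀ s ∈ A i, b s = (∑ᶠ s' ∈ A i, P s s' * b s') + r s - gains i) ∧
     (∀ s ∈ T, b s = (∑ s', P s s' * b s') + r s - g s) ∧
     (∀ i, b (sref i) = 0)) ↔
    (GainBiasEq P r g' b ∧ ∀ i, b (sref i) = 0) :=
  bscc_compression_correct_general P r hP n B hB hBinj A hA T hT sref gains g b g' hg'A hg'T
end

section
/- Suppose P is row-stochastic and irreducible, i.e. every state reaches every other state, and fix a state s₀. Then there exist a unique real number γ and a unique vector b : S → ℝ such that b s = ∑_{s'} P s s' * b s' + r s - γ for every state s and b s₀ = 0. (This is the unique solvability of the pinned gain/bias system used in Line 3 of Algorithm 3 to evaluate each BSCC, corresponding to Puterman's Condition 9.2.3.) -/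
open Matrix Finset

lemma homog_zero {S : Type*} [Fintype S] [Nonempty S] (P : Matrix S S ℝ)
    (hP : IsRowStochastic P) (hirr : ∀ s s', Reaches P s s')
    (γ : ℝ) (b : S → ℝ) (h : ∀ s, b s = ∑ s', P s s' * b s' - γ)
    (s₀ : S) (h0 : b s₀ = 0) : γ = 0 ∧ ∀ s, b s = 0 := by
  obtain ⟨smax, hmax⟩ := Finite.exists_max b
  obtain ⟨smin, hmin⟩ := Finite.exists_min b
  have hub : ∀ s, ∑ s', P s s' * b s' ≤ b smax := by
    intro s
    calc ∑ s', P s s' * b s' ≤ ∑ s', P s s' * b smax :=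
          Finset.sum_le_sum fun i _ => mul_le_mul_of_nonneg_left (hmax i) (hP.1 s i)
      _ = b smax := by rw [← Finset.sum_mul, hP.2 s, one_mul]
  have hlb : ∀ s, b smin ≤ ∑ s', P s s' * b s' := by
    intro s
    calc b smin = ∑ s', P s s' * b smin := by rw [← Finset.sum_mul, hP.2 s, one_mul]
      _ ≤ ∑ s', P s s' * b s' :=
          Finset.sum_le_sum fun i _ => mul_le_mul_of_nonneg_left (hmin i) (hP.1 s i)
  have hγ1 : γ ≤ 0 := by
    have := h smax
    have := hub smax
    linarith
  have hγ2 : 0 ≤ γ := by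
    have := h smin
    have := hlb smin
    linarith
  have hγ : γ = 0 := le_antisymm hγ1 hγ2
  subst hγ
  -- now b = Pb; propagate the max along reachability
  have step : ∀ t, b t = b smax → ∀ u, 0 < P t u → b u = b smax := by
    intro t ht u hu
    have hsum : ∑ s', P t s' * (b smax - b s') = 0 := by
      have := h t
      have hrow : ∑ s', P t s' * b smax = b smax := by
        rw [← Finset.sum_mul, hP.2 t, one_mul]
      calc ∑ s', P t s' * (b smax - b s')
          = ∑ s', (P t s' * b smax - P t s' * b s') := by simp [mul_sub]
        _ = (∑ s', P t s' * b smax) - ∑ s', P t s' * b s' := by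
            rw [Finset.sum_sub_distrib]
        _ = 0 := by rw [hrow]; linarith
    have hall := (Finset.sum_eq_zero_iff_of_nonneg (fun i _ =>
      mul_nonneg (hP.1 t i) (by linarith [hmax i]))).mp hsum u (Finset.mem_univ u)
    have := mul_eq_zero.mp hall
    rcases this with h1 | h2
    · exact absurd h1 (ne_of_gt hu)
    · linarith
  have hreach : ∀ s, b s = b smax := by
    intro s
    have hr := hirr smax s
    induction hr with
    | refl => rfl
    | tail _ hpu ih => exact step _ ih _ hpu
  have hbmax : b smax = 0 := by rw [hreach s₀] at h0; exact h0
  exact ⟨rfl, fun s => by rw [hreach s, hbmax]⟩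

/-- If `P` is row-stochastic and irreducible, then for any fixed state `s₀` there is a unique
pair `(γ, b)` with `b s = ∑ s', P s s' * b s' + r s - γ` for all `s` and `b s₀ = 0`. -/
theorem irreducible_pinned_gainBias_unique {S : Type*} [Fintype S] [Nonempty S]
    (P : Matrix S S ℝ) (r : S → ℝ) (hP : IsRowStochastic P)
    (hirr : ∀ s s', Reaches P s s') (s₀ : S) :
    ∃! p : ℝ × (S → ℝ),
      (∀ s, p.2 s = ∑ s', P s s' * p.2 s' + r s - p.1) ∧ p.2 s₀ = 0 := by
  classical
  -- the linear map whose solvability we need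
  let L : (ℝ × (S → ℝ)) →ₗ[ℝ] (ℝ × (S → ℝ)) :=
  { toFun := fun p => (p.2 s₀, fun s => p.2 s - ∑ s', P s s' * p.2 s' + p.1)
    map_add' := by
      intro p q
      ext
      · simp
      · simp [mul_add, Finset.sum_add_distrib]; ring
    map_smul' := by
      intro c p
      refine Prod.ext (by simp) (funext fun s => ?_)
      simp only [Prod.smul_snd, Prod.smul_fst, Pi.smul_apply, smul_eq_mul,
        RingHom.id_apply]
      have : ∑ s', P s s' * (c * p.2 s') = c * ∑ s', P s s' * p.2 s' := by
        rw [Finset.mul_sum]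
        exact Finset.sum_congr rfl fun i _ => by ring
      rw [this]; ring }
  have hinj : Function.Injective L := by
    rw [← LinearMap.ker_eq_bot, LinearMap.ker_eq_bot']
    intro p hp
    have h1 : p.2 s₀ = 0 := congrArg Prod.fst hp
    have h2 : ∀ s, p.2 s - ∑ s', P s s' * p.2 s' + p.1 = 0 := fun s =>
      congrFun (congrArg Prod.snd hp) s
    have h3 : ∀ s, p.2 s = ∑ s', P s s' * p.2 s' - p.1 := by
      intro s; have := h2 s; linarith
    obtain ⟨hγ, hb⟩ := homog_zero P hP hirr p.1 p.2 h3 s₀ h1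
    ext
    · exact hγ
    · exact hb _
  have hsurj : Function.Surjective L := LinearMap.surjective_of_injective hinj
  obtain ⟨p, hp⟩ := hsurj (0, r)
  have hp1 : p.2 s₀ = 0 := congrArg Prod.fst hp
  have hp2 : ∀ s, p.2 s - ∑ s', P s s' * p.2 s' + p.1 = r s := fun s =>
    congrFun (congrArg Prod.snd hp) s
  refine ⟨p, ⟨fun s => by have := hp2 s; linarith, hp1⟩, ?_⟩
  intro q ⟨hq1, hq2⟩
  apply hinj
  rw [hp]
  refine Prod.ext hq2 (funext fun s => ?_)
  show q.2 s - ∑ s', P s s' * q.2 s' + q.1 = r s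
  have := hq1 s
  linarith
end

section
/- If P is row-stochastic and irreducible, i.e. every state reaches every other state, then there exists a real number γ such that the Cesàro averages of expected rewards converge to the constant vector γ: the sequence n ↦ (n : ℝ)⁻¹ • ∑_{k=0}^{n-1} (P^k).mulVec r tends to the function s ↦ γ as n → ∞. (This is the fact that all states of a strongly connected Markov chain—and hence of a BSCC or MEC—have the same gain, underlying the MEC decomposition of Section 4.1.) -/
open Matrix Finset

/-! The Cesàro averages `A n = n⁻¹ • ∑ k < n, P ^ k` are row-stochastic, so they live in a compact
set, and `P * A n - A n = A n * P - A n = n⁻¹ • (P ^ n - 1) → 0`. Hence every cluster point `L`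
satisfies `P * L = L = L * P`. For two cluster points `L`, `L'` this gives `L' * A n = L'` and
`A n * L = L`, so `L' * L` equals both `L'` and `L`: the averages converge. The limit vector
`L *ᵥ r` is then `P`-harmonic, and by the maximum principle a harmonic vector of an irreducible
chain is constant, since its maximum propagates along every positive transition. -/

open Filter Topology

theorem MapClusterPt.eq_of_tendsto {X ι : Type*} [TopologicalSpace X] [T2Space X] {l : Filter ι}
    {u : ι → X} {x y : X} (hx : MapClusterPt x l u) (hy : Tendsto u l (𝓝 y)) : x = y :=
  eq_of_nhds_neBot (hx.clusterPt.mono hy)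

theorem mul_pow_eq_self_of_mul_eq_self {M : Type*} [Monoid M] {a b : M} (h : a * b = a) (k : ℕ) :
    a * b ^ k = a := by
  induction k with
  | zero => simp
  | succ k ih => rw [pow_succ, ← mul_assoc, ih, h]

theorem pow_mul_eq_self_of_mul_eq_self {M : Type*} [Monoid M] {a b : M} (h : b * a = a) (k : ℕ) :
    b ^ k * a = a := by
  induction k with
  | zero => simp
  | succ k ih => rw [pow_succ', mul_assoc, ih, h]

namespace Matrix

variable {S : Type*} [Fintype S] [DecidableEq S]

theorem isCompact_rowStochastic : IsCompact (rowStochastic ℝ S : Set (Matrix S S ℝ)) := by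
  have hbox : IsCompact (Set.univ.pi fun _ : S => Set.univ.pi fun _ : S => Set.Icc (0 : ℝ) 1) :=
    isCompact_univ_pi fun _ => isCompact_univ_pi fun _ => isCompact_Icc
  refine hbox.of_isClosed_subset ?_ fun M hM i _ j _ =>
    ⟨nonneg_of_mem_rowStochastic hM, le_one_of_mem_rowStochastic hM⟩
  have hset : (rowStochastic ℝ S : Set (Matrix S S ℝ)) =
      (⋂ i, ⋂ j, {M | 0 ≤ M i j}) ∩ {M | M *ᵥ 1 = 1} := by
    ext M
    simp [mem_rowStochastic]
  rw [hset]
  exact (isClosed_iInter fun i => isClosed_iInter fun j =>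
      isClosed_le continuous_const ((continuous_apply j).comp (continuous_apply i))).inter
    (isClosed_eq (continuous_id.matrix_mulVec continuous_const :
      Continuous fun M : Matrix S S ℝ => M *ᵥ 1) continuous_const)

noncomputable def cesaroAverage (P : Matrix S S ℝ) (n : ℕ) : Matrix S S ℝ :=
  (n : ℝ)⁻¹ • ∑ k ∈ Finset.range n, P ^ k

variable {P : Matrix S S ℝ}

theorem cesaroAverage_mem_rowStochastic (hP : P ∈ rowStochastic ℝ S) {n : ℕ} (hn : n ≠ 0) :
    cesaroAverage P n ∈ rowStochastic ℝ S := by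
  rw [cesaroAverage, Finset.smul_sum]
  refine convex_rowStochastic.sum_mem (fun _ _ => by positivity) ?_
    fun k _ => pow_mem hP k
  simp [hn]

theorem mul_cesaroAverage_sub (P : Matrix S S ℝ) (n : ℕ) :
    P * cesaroAverage P n - cesaroAverage P n = (n : ℝ)⁻¹ • (P ^ n - 1) := by
  rw [cesaroAverage, mul_smul_comm, ← smul_sub, ← sub_one_mul, mul_geom_sum]

theorem cesaroAverage_mul_sub (P : Matrix S S ℝ) (n : ℕ) :
    cesaroAverage P n * P - cesaroAverage P n = (n : ℝ)⁻¹ • (P ^ n - 1) := by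
  rw [cesaroAverage, smul_mul_assoc, ← smul_sub, ← mul_sub_one, geom_sum_mul]

theorem mul_cesaroAverage_of_mul_eq_self {L : Matrix S S ℝ} (h : L * P = L) {n : ℕ}
    (hn : n ≠ 0) : L * cesaroAverage P n = L := by
  rw [cesaroAverage, mul_smul_comm, Finset.mul_sum]
  simp only [mul_pow_eq_self_of_mul_eq_self h, Finset.sum_const, Finset.card_range]
  rw [← Nat.cast_smul_eq_nsmul ℝ, smul_smul, inv_mul_cancel₀ (by exact_mod_cast hn), one_smul]

theorem cesaroAverage_mul_of_mul_eq_self {L : Matrix S S ℝ} (h : P * L = L) {n : ℕ}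
    (hn : n ≠ 0) : cesaroAverage P n * L = L := by
  rw [cesaroAverage, smul_mul_assoc, Finset.sum_mul]
  simp only [pow_mul_eq_self_of_mul_eq_self h, Finset.sum_const, Finset.card_range]
  rw [← Nat.cast_smul_eq_nsmul ℝ, smul_smul, inv_mul_cancel₀ (by exact_mod_cast hn), one_smul]

theorem tendsto_inv_smul_pow_sub_one (hP : P ∈ rowStochastic ℝ S) :
    Tendsto (fun n : ℕ => (n : ℝ)⁻¹ • (P ^ n - 1)) atTop (𝓝 0) := by
  have hpow : Tendsto (fun n : ℕ => (n : ℝ)⁻¹ • P ^ n) atTop (𝓝 0) :=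
    (isCompact_rowStochastic.isVonNBounded ℝ).smul_tendsto_zero
      (.of_forall fun n => pow_mem hP n) tendsto_inv_atTop_nhds_zero_nat
  have hone : Tendsto (fun n : ℕ => (n : ℝ)⁻¹ • (1 : Matrix S S ℝ)) atTop (𝓝 0) := by
    simpa using (tendsto_inv_atTop_nhds_zero_nat (𝕜 := ℝ)).smul_const (1 : Matrix S S ℝ)
  simpa [smul_sub] using hpow.sub hone

theorem mul_eq_self_of_mapClusterPt (hP : P ∈ rowStochastic ℝ S) {L : Matrix S S ℝ}
    (hL : MapClusterPt L atTop (cesaroAverage P)) : P * L = L ∧ L * P = L := by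
  have hlim := tendsto_inv_smul_pow_sub_one hP
  constructor
  · have h := hL.continuousAt_comp (f := fun X => P * X - X)
      ((continuous_const.matrix_mul continuous_id).sub continuous_id).continuousAt
    exact sub_eq_zero.1 <| h.eq_of_tendsto <| by
      simpa only [Function.comp_def, mul_cesaroAverage_sub] using hlim
  · have h := hL.continuousAt_comp (f := fun X => X * P - X)
      ((continuous_id.matrix_mul continuous_const).sub continuous_id).continuousAt
    exact sub_eq_zero.1 <| h.eq_of_tendsto <| by
      simpa only [Function.comp_def, cesaroAverage_mul_sub] using hlim

theorem eq_of_mapClusterPt (hP : P ∈ rowStochastic ℝ S) {L L' : Matrix S S ℝ}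
    (hL : MapClusterPt L atTop (cesaroAverage P)) (hL' : MapClusterPt L' atTop (cesaroAverage P)) :
    L = L' := by
  have hPL := (mul_eq_self_of_mapClusterPt hP hL).1
  have hL'P := (mul_eq_self_of_mapClusterPt hP hL').2
  have hleft : L' * L = L :=
    (hL'.continuousAt_comp (continuous_id.matrix_mul continuous_const).continuousAt).eq_of_tendsto
      (tendsto_const_nhds.congr' (eventually_ne_atTop 0 |>.mono fun n hn =>
        (cesaroAverage_mul_of_mul_eq_self hPL hn).symm))
  have hright : L' * L = L' :=
    (hL.continuousAt_comp (continuous_const.matrix_mul continuous_id).continuousAt).eq_of_tendsto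
      (tendsto_const_nhds.congr' (eventually_ne_atTop 0 |>.mono fun n hn =>
        (mul_cesaroAverage_of_mul_eq_self hL'P hn).symm))
  rw [← hleft, hright]

theorem exists_tendsto_cesaroAverage (hP : P ∈ rowStochastic ℝ S) :
    ∃ L, P * L = L ∧ Tendsto (cesaroAverage P) atTop (𝓝 L) := by
  have hmem : ∀ᶠ n in atTop, cesaroAverage P n ∈ rowStochastic ℝ S :=
    eventually_ne_atTop 0 |>.mono fun _ => cesaroAverage_mem_rowStochastic hP
  obtain ⟨L, -, hL⟩ := isCompact_rowStochastic.exists_mapClusterPt (le_principal_iff.2 hmem)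
  exact ⟨L, (mul_eq_self_of_mapClusterPt hP hL).1,
    isCompact_rowStochastic.tendsto_nhds_of_unique_mapClusterPt hmem
      fun L' _ hL' => eq_of_mapClusterPt hP hL' hL⟩

theorem apply_eq_of_mulVec_eq_self_of_le (hP : P ∈ rowStochastic ℝ S) {g : S → ℝ}
    (hg : P *ᵥ g = g) {s t : S} (hmax : ∀ u, g u ≤ g s) (hst : 0 < P s t) : g t = g s := by
  have hsum : ∑ u, P s u * (g s - g u) = 0 := by
    have hs := congr_fun hg s
    simp only [mulVec, dotProduct] at hs
    simp only [mul_sub, Finset.sum_sub_distrib, ← Finset.sum_mul, sum_row_of_mem_rowStochastic hP,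
      one_mul, hs, sub_self]
  have ht := (Finset.sum_eq_zero_iff_of_nonneg fun u _ =>
    mul_nonneg (nonneg_of_mem_rowStochastic hP) (sub_nonneg.2 (hmax u))).1 hsum t
    (Finset.mem_univ t)
  linarith [(mul_eq_zero.1 ht).resolve_left hst.ne']

theorem exists_eq_const_of_mulVec_eq_self [Nonempty S] (hP : P ∈ rowStochastic ℝ S)
    (hirr : ∀ s t, Reaches P s t) {g : S → ℝ} (hg : P *ᵥ g = g) : ∃ γ : ℝ, g = fun _ => γ := by
  obtain ⟨s, hs⟩ := Finite.exists_max g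
  refine ⟨g s, funext fun t => ?_⟩
  induction hirr s t with
  | refl => rfl
  | tail _ hbc ih => exact (apply_eq_of_mulVec_eq_self_of_le hP hg (ih ▸ hs) hbc).trans ih

end Matrix

/-- If `P` is row-stochastic and irreducible, then there is a real `γ` such that the Cesàro
averages of the expected rewards converge to the constant vector `γ` (all states of a strongly
connected Markov chain have the same gain). -/
theorem irreducible_cesaro_tendsto_const {S : Type*} [Fintype S] [DecidableEq S] [Nonempty S]
    (P : Matrix S S ℝ) (r : S → ℝ) (hP : IsRowStochastic P)
    (hirr : ∀ s s', Reaches P s s') :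
    ∃ γ : ℝ, Filter.Tendsto
      (fun n : ℕ => (n : ℝ)⁻¹ • ∑ k ∈ Finset.range n, (P ^ k).mulVec r)
      Filter.atTop (nhds fun _ => γ) := by
  have hPst : P ∈ rowStochastic ℝ S := mem_rowStochastic_iff_sum.2 hP
  obtain ⟨L, hPL, hL⟩ := exists_tendsto_cesaroAverage hPst
  obtain ⟨γ, hγ⟩ := exists_eq_const_of_mulVec_eq_self hPst hirr (g := L *ᵥ r)
    (by rw [mulVec_mulVec, hPL])
  refine ⟨γ, hγ ▸ ?_⟩
  have h := ((continuous_id.matrix_mulVec continuous_const :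
    Continuous fun M : Matrix S S ℝ => M *ᵥ r).tendsto L).comp hL
  simpa only [Function.comp_def, id_eq, cesaroAverage, smul_mulVec, sum_mulVec] using h
end
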